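/- Given any positive real numbers r_1, ..., r_n with n ≥ 4 (repetitions allowed), there exist points v_1, ..., v_n in ℝ³ with ‖v_i‖ = r_i for all i such that every v_i is an extreme point of the convex hull of {v_1, ..., v_n} and the origin lies in the interior of this convex hull. -/

import Mathlib

/-!
Place the points on the ellipsoid of revolution `(α x)² + β² (y² + z²) = 1` with
`1 / α < rᵢ < 1 / β`: it meets the sphere of radius `rᵢ` in the two circles `x = ± xᵢ`, so every
radius can be realised on it, and the points can be given pairwise distinct directions about the
first axis. The diagonal map `diag(α, β, β)` sends the ellipsoid onto the unit sphere, and distinct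
points of a sphere are convexly independent, hence so are the points themselves. Finally, if the
first four points are chosen on both sides of the plane `x = 0` and in opposite pairs of directions,
then `0` is a positive combination of them and they span `ℝ³`, so `0` is interior to their hull.
-/

open Set

section General

variable {ι E : Type*} [NormedAddCommGroup E] [NormedSpace ℝ E]

theorem convexIndependent_of_forall_mem_sphere [StrictConvexSpace ℝ E] {p : ι → E}
    (hp : Function.Injective p) {c : E} {R : ℝ} (hR : R ≠ 0) (h : ∀ i, p i ∈ Metric.sphere c R) :
    ConvexIndependent ℝ p := by
  let f : ι ↪ extremePoints ℝ (Metric.closedBall c R) :=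
    ⟨fun i => ⟨p i, StrictConvexSpace.sphere_subset_extremePoints_closedBall c hR (h i)⟩,
      fun _ _ hij => hp (congrArg Subtype.val hij)⟩
  exact (convex_closedBall c R).convexIndependent_extremePoints.comp_embedding f

theorem ConvexIndependent.of_comp {F : Type*} [AddCommGroup F] [Module ℝ F] (f : E →ₗ[ℝ] F)
    {p : ι → E} (h : ConvexIndependent ℝ (f ∘ p)) : ConvexIndependent ℝ p := by
  intro s x hx
  apply h s x
  rw [image_comp, ← f.image_convexHull]
  exact mem_image_of_mem f hx

theorem zero_mem_interior_convexHull_of_sum_smul_eq_zero [FiniteDimensional ℝ E] [Fintype ι]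
    [Nonempty ι] {v : ι → E} {w : ι → ℝ} (hw : ∀ i, 0 < w i) (hsum : ∑ i, w i • v i = 0)
    (hspan : Submodule.span ℝ (range v) = ⊤) :
    (0 : E) ∈ interior (convexHull ℝ (range v)) := by
  set L := Fintype.linearCombination ℝ v
  have hL : Function.Surjective L :=
    (span_range_eq_top_iff_surjective_fintypeLinearCombination ℝ v).1 hspan
  have hS : 0 < ∑ i, w i := Finset.sum_pos (fun i _ => hw i) Finset.univ_nonempty
  set w' : ι → ℝ := fun i => (∑ j, w j)⁻¹ * w i
  have hw'1 : ∑ i, w' i = 1 := by rw [← Finset.mul_sum, inv_mul_cancel₀ hS.ne']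
  have hLw' (t : ℝ) : ∑ i, (t * w' i) • v i = 0 := by
    simp only [w', ← smul_smul, ← Finset.smul_sum, hsum, smul_zero]
  -- Shifting `c` along `w'`, which `L` kills, turns `L c` into a convex combination of the `v i`.
  set U := {c : ι → ℝ | ∀ i, 0 < c i + (1 - ∑ j, c j) * w' i}
  have hU : IsOpen U := by
    simp only [U, ofPred_forall]
    exact isOpen_iInter_of_finite fun i => isOpen_lt continuous_const (by fun_prop)
  refine mem_interior.2 ⟨L '' U, ?_, L.isOpenMap_of_finiteDimensional hL U hU, w', ?_, ?_⟩
  · rintro _ ⟨c, hc, rfl⟩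
    have hLc : L c = ∑ i, (c i + (1 - ∑ j, c j) * w' i) • v i := by
      simp only [add_smul, Finset.sum_add_distrib, hLw', add_zero, L,
        Fintype.linearCombination_apply]
    rw [hLc]
    refine (convex_convexHull ℝ _).sum_mem (fun i _ => (hc i).le) ?_
      (fun i _ => subset_convexHull ℝ _ (mem_range_self i))
    rw [Finset.sum_add_distrib, ← Finset.mul_sum, hw'1]
    ring
  · intro i
    simp only [hw'1, sub_self, zero_mul, add_zero, w']
    exact mul_pos (inv_pos.2 hS) (hw i)
  · simpa [L, Fintype.linearCombination_apply] using hLw' 1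

end General

theorem exists_mul_lt_one_lt_mul {ι : Type*} [Finite ι] {r : ι → ℝ} (hr : ∀ i, 0 < r i) :
    ∃ α β : ℝ, 0 < β ∧ ∀ i, β * r i < 1 ∧ 1 < α * r i := by
  obtain ⟨M, hM⟩ := Finite.exists_le r
  obtain ⟨N, hN⟩ := Finite.exists_le fun i => (r i)⁻¹
  refine ⟨N + 1, (|M| + 1)⁻¹, by positivity, fun i => ⟨?_, ?_⟩⟩
  · rw [inv_mul_lt_iff₀ (by positivity)]
    linarith [le_abs_self M, hM i]
  · have := mul_le_mul_of_nonneg_right (hN i) (hr i).le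
    rw [inv_mul_cancel₀ (hr i).ne'] at this
    linarith [hr i]

theorem exists_circle_inter_ellipse {α β r : ℝ} (hβ : 0 < β) (hr : 0 < r) (hβr : β * r < 1)
    (hαr : 1 < α * r) :
    ∃ x y : ℝ, 0 < x ∧ 0 < y ∧ x ^ 2 + y ^ 2 = r ^ 2 ∧ (α * x) ^ 2 + (β * y) ^ 2 = 1 := by
  have hβα : β < α := lt_of_mul_lt_mul_right (hβr.trans hαr) hr.le
  have hαβ : 0 < α ^ 2 - β ^ 2 := sub_pos.2 (pow_lt_pow_left₀ hβα hβ.le two_ne_zero)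
  have hx : 0 < (1 - (β * r) ^ 2) / (α ^ 2 - β ^ 2) :=
    div_pos (sub_pos.2 (pow_lt_one₀ (by positivity) hβr two_ne_zero)) hαβ
  have hy : 0 < ((α * r) ^ 2 - 1) / (α ^ 2 - β ^ 2) :=
    div_pos (sub_pos.2 (one_lt_pow₀ hαr two_ne_zero)) hαβ
  refine ⟨_, _, Real.sqrt_pos.2 hx, Real.sqrt_pos.2 hy, ?_, ?_⟩
  · rw [Real.sq_sqrt hx.le, Real.sq_sqrt hy.le]
    field_simp
    ring
  · linear_combination (norm := skip) α ^ 2 * Real.sq_sqrt hx.le + β ^ 2 * Real.sq_sqrt hy.le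
    field_simp
    ring

theorem mod_two_eq_of_neg_one_pow_mul_eq {i j : ℕ} {y y' : ℝ} (hy : 0 < y) (hy' : 0 < y')
    (h : (-1) ^ i * y = (-1) ^ j * y') : i % 2 = j % 2 := by
  rcases Nat.even_or_odd i with hi | hi <;> rcases Nat.even_or_odd j with hj | hj <;>
    simp only [hi.neg_one_pow, hj.neg_one_pow] at h <;>
    first
    | rw [Nat.even_iff.1 hi, Nat.even_iff.1 hj]
    | rw [Nat.odd_iff.1 hi, Nat.odd_iff.1 hj]
    | linarith

local notation "ℝ³" => EuclideanSpace ℝ (Fin 3)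

noncomputable def crossConfig (a b : Fin 4 → ℝ) : Fin 4 → ℝ³ :=
  ![!₂[a 0, b 0, 0], !₂[a 1, -b 1, 0], !₂[-a 2, b 2, b 2], !₂[-a 3, -b 3, -b 3]]

section crossConfig

variable {a b : Fin 4 → ℝ}

theorem span_range_crossConfig (ha : ∀ k, 0 < a k) (hb : ∀ k, 0 < b k) :
    Submodule.span ℝ (range (crossConfig a b)) = ⊤ := by
  have hli : LinearIndependent ℝ (crossConfig a b ∘ Fin.castSucc) := by
    refine Fintype.linearIndependent_iff.2 fun g hg => ?_
    have h0 := congrArg (· 0) hg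
    have h1 := congrArg (· 1) hg
    have h2 := congrArg (· 2) hg
    simp only [crossConfig, Function.comp_apply, Fin.sum_univ_three, Fin.castSucc_zero,
      Fin.castSucc_one, Fin.reduceCastSucc, Matrix.cons_val, Matrix.cons_val_zero,
      Matrix.cons_val_one, PiLp.add_apply, PiLp.smul_apply, PiLp.zero_apply, smul_eq_mul, mul_neg,
      mul_zero, add_zero, zero_add, mul_eq_zero] at h0 h1 h2
    have hg2 : g 2 = 0 := h2.resolve_right (hb 2).ne'
    have hg0 : g 0 = 0 := by
      have hp : 0 < a 0 * b 1 + a 1 * b 0 := by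
        have := ha 0; have := ha 1; have := hb 0; have := hb 1; positivity
      have : g 0 * (a 0 * b 1 + a 1 * b 0) = 0 := by
        linear_combination b 1 * h0 + a 1 * h1 + (a 2 * b 1 - a 1 * b 2) * hg2
      exact (mul_eq_zero.1 this).resolve_right hp.ne'
    have hg1 : g 1 = 0 := by
      have : g 1 * b 1 = 0 := by linear_combination -h1 + b 0 * hg0 + b 2 * hg2
      exact (mul_eq_zero.1 this).resolve_right (hb 1).ne'
    intro i
    fin_cases i <;> assumption
  exact top_unique ((hli.span_eq_top_of_card_eq_finrank' (by simp)).ge.trans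
    (Submodule.span_mono (range_comp_subset_range _ _)))

theorem zero_mem_interior_convexHull_crossConfig (ha : ∀ k, 0 < a k) (hb : ∀ k, 0 < b k) :
    (0 : ℝ³) ∈ interior (convexHull ℝ (range (crossConfig a b))) := by
  -- with `v = crossConfig a b`: `b 1 • v 0 + b 0 • v 1 = p • e₀`, `b 3 • v 2 + b 2 • v 3 = -q • e₀`
  set p := a 0 * b 1 + a 1 * b 0
  set q := a 2 * b 3 + a 3 * b 2
  have := ha 0; have := ha 1; have := ha 2; have := ha 3
  have := hb 0; have := hb 1; have := hb 2; have := hb 3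
  refine zero_mem_interior_convexHull_of_sum_smul_eq_zero
    (w := ![q * b 1, q * b 0, p * b 3, p * b 2]) (fun k => ?_) ?_ (span_range_crossConfig ha hb)
  · fin_cases k <;> simp only [Fin.isValue, Fin.zero_eta, Fin.mk_one, Fin.reduceFinMk,
      Matrix.cons_val, Matrix.cons_val_zero, Matrix.cons_val_one] <;> positivity
  · ext j
    fin_cases j <;>
      simp only [crossConfig, p, q, Fin.isValue, Fin.zero_eta, Fin.mk_one, Fin.reduceFinMk,
        Fin.sum_univ_four, Matrix.cons_val, Matrix.cons_val_zero, Matrix.cons_val_one,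
        PiLp.add_apply, PiLp.smul_apply, PiLp.zero_apply, smul_eq_mul] <;> ring

end crossConfig

/-- The point `(x, y)` of the half-plane `y > 0` turned about the first axis into the direction
`± (1, k) / √(1 + k²)` of the last two coordinates, where `k = i / 2` and the sign is `(-1) ^ i`,
and reflected in `x = 0` when `k` is odd. Distinct `i` give distinct directions, and the points
`i = 0, 1, 2, 3` form a `crossConfig`. -/
noncomputable def revolve (i : ℕ) (x y : ℝ) : ℝ³ :=
  !₂[(-1) ^ (i / 2) * x, (-1) ^ i * y / √(1 + (i / 2 : ℕ) ^ 2),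
    (-1) ^ i * (i / 2 : ℕ) * y / √(1 + (i / 2 : ℕ) ^ 2)]

theorem norm_revolve_sq (i : ℕ) (x y : ℝ) : ‖revolve i x y‖ ^ 2 = x ^ 2 + y ^ 2 := by
  have h : 0 < 1 + ((i / 2 : ℕ) : ℝ) ^ 2 := by positivity
  have hsign (k : ℕ) : ((-1 : ℝ) ^ k) ^ 2 = 1 := by
    rw [← pow_mul, mul_comm, pow_mul, neg_one_sq, one_pow]
  simp only [revolve, EuclideanSpace.norm_sq_eq, Fin.sum_univ_three, Matrix.cons_val_zero,
    Matrix.cons_val_one, Matrix.cons_val_two, Matrix.head_cons, Matrix.tail_cons, Real.norm_eq_abs,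
    sq_abs, div_pow, mul_pow, hsign, Real.sq_sqrt h.le]
  field_simp
  ring

theorem toEuclideanLin_diagonal_revolve (α β : ℝ) (i : ℕ) (x y : ℝ) :
    (Matrix.diagonal ![α, β, β]).toEuclideanLin (revolve i x y) = revolve i (α * x) (β * y) := by
  ext j
  fin_cases j <;>
    simp only [revolve, Matrix.toLpLin_toLp, Matrix.toLin'_apply, Matrix.mulVec_diagonal,
      Fin.isValue, Fin.zero_eta, Fin.mk_one, Fin.reduceFinMk, Matrix.cons_val,
      Matrix.cons_val_zero, Matrix.cons_val_one] <;> ring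

theorem revolve_injective {i j : ℕ} {x y x' y' : ℝ} (hy : 0 < y) (hy' : 0 < y')
    (h : revolve i x y = revolve j x' y') : i = j := by
  have h1 := congrArg (· 1) h
  have h2 := congrArg (· 2) h
  simp only [revolve, PiLp.toLp_apply, Matrix.cons_val_zero, Matrix.cons_val_one,
    Matrix.cons_val_two, Matrix.head_cons, Matrix.tail_cons] at h1 h2
  have hc : (-1) ^ i * y / √(1 + (i / 2 : ℕ) ^ 2) ≠ 0 := by
    have : (-1 : ℝ) ^ i ≠ 0 := by simp
    positivity
  have hk : ((i / 2 : ℕ) : ℝ) = (j / 2 : ℕ) := by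
    refine mul_right_cancel₀ hc ?_
    calc _ = (-1) ^ i * (i / 2 : ℕ) * y / √(1 + (i / 2 : ℕ) ^ 2) := by ring
      _ = _ := by rw [h2, h1]; ring
  rw [hk, div_left_inj' (by positivity)] at h1
  have := mod_two_eq_of_neg_one_pow_mul_eq hy hy' h1
  have hk' : i / 2 = j / 2 := by exact_mod_cast hk
  omega

theorem zero_mem_interior_convexHull_revolve {x y : Fin 4 → ℝ} (hx : ∀ k, 0 < x k)
    (hy : ∀ k, 0 < y k) :
    (0 : ℝ³) ∈ interior (convexHull ℝ (range fun k : Fin 4 => revolve k (x k) (y k))) := by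
  convert zero_mem_interior_convexHull_crossConfig hx
    (b := fun k => y k / √(1 + (k / 2 : ℕ) ^ 2)) fun k => div_pos (hy k) (by positivity) using 4
  ext k : 1
  fin_cases k <;> ext j <;> fin_cases j <;> simp [revolve, crossConfig] <;> ring

theorem stmt9 (n : ℕ) (hn : 4 ≤ n) (r : Fin n → ℝ) (hpos : ∀ i, 0 < r i) :
    ∃ v : Fin n → EuclideanSpace ℝ (Fin 3),
      (∀ i, ‖v i‖ = r i) ∧
      (∀ i, v i ∉ convexHull ℝ (v '' {j | j ≠ i})) ∧
      (0 : EuclideanSpace ℝ (Fin 3)) ∈ interior (convexHull ℝ (Set.range v)) := by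
  obtain ⟨α, β, hβ, hαβ⟩ := exists_mul_lt_one_lt_mul hpos
  choose x y hx hy hcircle hellipse using
    fun i => exists_circle_inter_ellipse hβ (hpos i) (hαβ i).1 (hαβ i).2
  let v (i : Fin n) := revolve i (x i) (y i)
  have hv : ConvexIndependent ℝ v := by
    refine .of_comp (Matrix.diagonal ![α, β, β]).toEuclideanLin
      (convexIndependent_of_forall_mem_sphere (c := 0) ?_ one_ne_zero fun i => ?_)
    · intro i j hij
      simp only [Function.comp_apply, v, toEuclideanLin_diagonal_revolve] at hij
      exact Fin.ext (revolve_injective (mul_pos hβ (hy i)) (mul_pos hβ (hy j)) hij)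
    · rw [mem_sphere_zero_iff_norm, Function.comp_apply, toEuclideanLin_diagonal_revolve,
        ← pow_eq_one_iff_of_nonneg (norm_nonneg _) two_ne_zero, norm_revolve_sq, hellipse i]
  refine ⟨v, fun i => ?_, fun i hi => hv {j | j ≠ i} i hi rfl, ?_⟩
  · exact (sq_eq_sq₀ (norm_nonneg _) (hpos i).le).1 (by rw [norm_revolve_sq, hcircle])
  · exact interior_mono (convexHull_mono (range_comp_subset_range (Fin.castLE hn) v))
      (zero_mem_interior_convexHull_revolve (fun k => hx _) (fun k => hy _))
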